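/- Let R(z) ∈ ℤ[z] be a monic polynomial of even degree 2s with R(0) = 1 whose multiset of complex roots is closed under inversion (ξ a root implies ξ^{−1} a root with the same multiplicity), and such that 1 is not a root. Then the power series F(x) = Σ_{n≥1} n Π_{j=1}^{2s}(ξ_j^n − 1) x^n represents a rational function G(x) with integer coefficients satisfying G(x) = G(1/x). -/

import Mathlib

/-!
Expanding the product, `n ∏ⱼ (ξⱼⁿ - 1) = ∑_A (-1)^|Aᶜ| n α_Aⁿ` with `α_A = ∏_{j ∈ A} ξⱼ`, so
`F = ∑_A ± α_A x / (1 - α_A x)²`, which is `P / Q` with `Q = ∏_A (1 - α_A x)²`. The coefficients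
of `P` and `Q` are integer symmetric polynomials in the `ξⱼ`, hence integers, since the `ξⱼ` are
the roots of `R ∈ ℤ[z]`. Inverting the roots permutes the `α_A` (as `α_A ↦ α_A⁻¹`, preserving `|A|`)
and `u / (1 - u)²` is invariant under `u ↦ u⁻¹`, so `G(1/x) = G(x)` away from the finitely many
poles; the polynomial identity `P(x) Q(1/x) = P(1/x) Q(x)` then extends to every `x ≠ 0`.
-/

open Polynomial Finset

theorem PowerSeries.mk_natCast_mul_pow_mul_one_sub_sq {S : Type*} [CommRing S] (a : S) :
    (PowerSeries.mk fun n => (n : S) * a ^ n) * (1 - PowerSeries.C a * PowerSeries.X) ^ 2 =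
      PowerSeries.C a * PowerSeries.X := by
  have hX : (PowerSeries.mk fun n => (n : S)) =
      PowerSeries.X * PowerSeries.mk fun n => ((1 + n).choose 1 : S) := by
    ext (_ | n) <;> simp [PowerSeries.coeff_succ_X_mul, add_comm]
  have hmk : (PowerSeries.mk fun n => (n : S)) * (1 - PowerSeries.X) ^ 2 = PowerSeries.X := by
    rw [hX, mul_assoc, PowerSeries.mk_add_choose_mul_one_sub_pow_eq_one, mul_one]
  have := congrArg (PowerSeries.rescale a) hmk
  rw [map_mul, map_pow, map_sub, map_one, PowerSeries.rescale_X, PowerSeries.rescale_mk] at this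
  simpa only [mul_comm] using this

section NumerDenom

variable {ι κ S T : Type*} [Fintype ι] [Fintype κ] [CommRing S] [CommRing T]

/-- `numerPoly c w / denomPoly w = ∑ i, c i * w i X / (1 - w i X)²`, the sum of the power series
`∑ n, n (∑ i, c i * w i ^ n) Xⁿ`. -/
noncomputable def denomPoly (w : ι → S) : S[X] := ∏ i, (1 - C (w i) * X) ^ 2

theorem map_denomPoly (φ : S →+* T) (w : ι → S) :
    (denomPoly w).map φ = denomPoly (φ ∘ w) := by
  simp [denomPoly, Polynomial.map_prod]

theorem denomPoly_comp_equiv (e : κ ≃ ι) (w : ι → S) : denomPoly (w ∘ e) = denomPoly w :=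
  e.prod_comp fun i => (1 - C (w i) * X) ^ 2

theorem eval_zero_denomPoly (w : ι → S) : (denomPoly w).eval 0 = 1 := by
  simp [denomPoly, eval_prod]

theorem denomPoly_ne_zero [Nontrivial S] (w : ι → S) : denomPoly w ≠ 0 := fun h => by
  simpa [h] using eval_zero_denomPoly w

variable [DecidableEq ι]

noncomputable def numerPoly (c w : ι → S) : S[X] :=
  ∑ i, C (c i * w i) * X * ∏ j ∈ univ.erase i, (1 - C (w j) * X) ^ 2

theorem map_numerPoly (φ : S →+* T) (c w : ι → S) :
    (numerPoly c w).map φ = numerPoly (φ ∘ c) (φ ∘ w) := by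
  simp [numerPoly, Polynomial.map_sum, Polynomial.map_prod]

theorem numerPoly_comp_equiv [DecidableEq κ] (e : κ ≃ ι) (c w : ι → S) :
    numerPoly (c ∘ e) (w ∘ e) = numerPoly c w := by
  refine Fintype.sum_equiv e _ _ fun k => ?_
  have herase : univ.erase (e k) = (univ.erase k).map e.toEmbedding := by
    rw [map_erase, map_univ_equiv]
    rfl
  rw [herase, prod_map]
  rfl

theorem mk_mul_denomPoly (c w : ι → S) :
    (PowerSeries.mk fun n => (n : S) * ∑ i, c i * w i ^ n) * (denomPoly w : PowerSeries S) =
      numerPoly c w := by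
  have hmk : (PowerSeries.mk fun n => (n : S) * ∑ i, c i * w i ^ n) =
      ∑ i, PowerSeries.C (c i) * PowerSeries.mk fun n => (n : S) * w i ^ n := by
    ext n
    simp [Finset.mul_sum, map_sum, mul_left_comm]
  rw [hmk, denomPoly, numerPoly, ← coeToPowerSeries.ringHom_apply,
    ← coeToPowerSeries.ringHom_apply, sum_mul]
  simp only [map_sum, map_prod, map_mul, map_pow, map_sub, map_one]
  simp only [coeToPowerSeries.ringHom_apply, coe_C, coe_X]
  refine sum_congr rfl fun i _ => ?_
  rw [← mul_prod_erase _ _ (mem_univ i), ← mul_assoc, mul_assoc (PowerSeries.C _),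
    PowerSeries.mk_natCast_mul_pow_mul_one_sub_sq]
  ring

theorem eval_numerPoly_eq {K : Type*} [Field K] (c w : ι → K) {x : K}
    (hx : (denomPoly w).eval x ≠ 0) :
    (numerPoly c w).eval x = (denomPoly w).eval x * ∑ i, c i * (w i * x / (1 - w i * x) ^ 2) := by
  have hfactor : ∀ i, 1 - w i * x ≠ 0 := by
    simpa [denomPoly, eval_prod, prod_ne_zero_iff] using hx
  simp only [numerPoly, denomPoly, eval_prod, eval_finsetSum, eval_mul, eval_pow, eval_sub,
    eval_one, eval_C, eval_X, mul_sum]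
  refine sum_congr rfl fun i _ => ?_
  rw [← mul_prod_erase _ _ (mem_univ i)]
  field_simp [hfactor i]

end NumerDenom

theorem div_one_sub_sq_inv {K : Type*} [Field K] (u : K) :
    u⁻¹ / (1 - u⁻¹) ^ 2 = u / (1 - u) ^ 2 := by
  rcases eq_or_ne u 0 with rfl | h0
  · simp
  rcases eq_or_ne u 1 with rfl | h1
  · simp
  have : 1 - u ≠ 0 := sub_ne_zero.2 h1.symm
  field_simp
  ring

theorem sum_mul_div_one_sub_sq_inv {ι K : Type*} [Fintype ι] [Field K] {c w : ι → K}
    (e : ι ≃ ι) (hc : ∀ i, c (e i) = c i) (hw : ∀ i, w (e i) = (w i)⁻¹) (x : K) :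
    ∑ i, c i * (w i * x⁻¹ / (1 - w i * x⁻¹) ^ 2) = ∑ i, c i * (w i * x / (1 - w i * x) ^ 2) := by
  rw [← e.sum_comp]
  refine sum_congr rfl fun i _ => ?_
  rw [hc, hw, ← mul_inv, div_one_sub_sq_inv]

theorem eval_reflect_of_ne_zero {K : Type*} [Field K] {f : K[X]} {N : ℕ} (hf : f.natDegree ≤ N)
    {x : K} (hx : x ≠ 0) : (f.reflect N).eval x = x ^ N * f.eval x⁻¹ := by
  have : Invertible x⁻¹ := invertibleOfNonzero (inv_ne_zero hx)
  have h := eval₂_reflect_mul_pow (RingHom.id K) x⁻¹ N f hf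
  rw [invOf_eq_inv, inv_inv, eval₂_id, eval₂_id] at h
  rw [← h, mul_left_comm, ← mul_pow, mul_inv_cancel₀ hx, one_pow, mul_one]

theorem eval_mul_eval_inv_comm_of_eventually {K : Type*} [Field K] [Infinite K] (p q : K[X])
    (h : ∀ᶠ x in Filter.cofinite, p.eval x * q.eval x⁻¹ = p.eval x⁻¹ * q.eval x)
    {x : K} (hx : x ≠ 0) : p.eval x * q.eval x⁻¹ = p.eval x⁻¹ * q.eval x := by
  obtain ⟨N, hpN, hqN⟩ : ∃ N, p.natDegree ≤ N ∧ q.natDegree ≤ N :=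
    ⟨_, le_max_left _ _, le_max_right _ _⟩
  have hW : p * q.reflect N - p.reflect N * q = 0 := by
    refine eq_zero_of_infinite_isRoot _ (Filter.frequently_cofinite_iff_infinite.1 ?_)
    refine ((h.and (Filter.eventually_cofinite_ne 0)).mono fun y ⟨hy, hy0⟩ => ?_).frequently
    simp only [IsRoot, eval_sub, eval_mul, eval_reflect_of_ne_zero hpN hy0,
      eval_reflect_of_ne_zero hqN hy0]
    linear_combination y ^ N * hy
  have := congrArg (eval x) hW
  simp only [eval_sub, eval_mul, eval_zero, eval_reflect_of_ne_zero hpN hx,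
    eval_reflect_of_ne_zero hqN hx] at this
  have hxN : x ^ N ≠ 0 := pow_ne_zero _ hx
  apply mul_left_cancel₀ hxN
  linear_combination this

theorem eval_numerPoly_mul_eval_denomPoly_inv {ι K : Type*} [Fintype ι] [DecidableEq ι] [Field K]
    [Infinite K] {c w : ι → K} (e : ι ≃ ι) (hc : ∀ i, c (e i) = c i)
    (hw : ∀ i, w (e i) = (w i)⁻¹) {x : K} (hx : x ≠ 0) :
    (numerPoly c w).eval x * (denomPoly w).eval x⁻¹ =
      (numerPoly c w).eval x⁻¹ * (denomPoly w).eval x := by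
  refine eval_mul_eval_inv_comm_of_eventually _ _ ?_ hx
  have hroots : ∀ᶠ y in Filter.cofinite, (denomPoly w).eval y ≠ 0 :=
    (finite_setOfPred_isRoot (denomPoly_ne_zero w)).eventually_cofinite_notMem
  filter_upwards [hroots, inv_injective.tendsto_cofinite.eventually hroots] with y hy hyinv
  rw [eval_numerPoly_eq c w hy, eval_numerPoly_eq c w hyinv, sum_mul_div_one_sub_sq_inv e hc hw]
  ring

section GenFun

variable {σ S T : Type*} [Fintype σ] [CommRing S] [CommRing T]

noncomputable def genFunDenom (v : σ → S) : S[X] := denomPoly fun A : Finset σ => ∏ j ∈ A, v j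

theorem map_genFunDenom (φ : S →+* T) (v : σ → S) :
    (genFunDenom v).map φ = genFunDenom (φ ∘ v) := by
  simp [genFunDenom, map_denomPoly, Function.comp_def]

theorem genFunDenom_comp_perm (e : Equiv.Perm σ) (v : σ → S) :
    genFunDenom (v ∘ e) = genFunDenom v := by
  rw [genFunDenom, genFunDenom,
    ← denomPoly_comp_equiv (Equiv.finsetCongr e) fun A => ∏ j ∈ A, v j]
  congr 1
  ext A
  simp [prod_map]

variable [DecidableEq σ]

noncomputable def genFunNumer (v : σ → S) : S[X] :=
  numerPoly (fun A : Finset σ => (-1) ^ #Aᶜ) fun A => ∏ j ∈ A, v j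

theorem map_genFunNumer (φ : S →+* T) (v : σ → S) :
    (genFunNumer v).map φ = genFunNumer (φ ∘ v) := by
  simp [genFunNumer, map_numerPoly, Function.comp_def]

theorem genFunNumer_comp_perm (e : Equiv.Perm σ) (v : σ → S) :
    genFunNumer (v ∘ e) = genFunNumer v := by
  rw [genFunNumer, genFunNumer, ← numerPoly_comp_equiv (Equiv.finsetCongr e)
    (fun A : Finset σ => (-1 : S) ^ #Aᶜ) fun A => ∏ j ∈ A, v j]
  congr 1 <;> ext A <;> simp [prod_map, card_compl]

theorem prod_pow_sub_one_eq_sum (v : σ → S) (n : ℕ) :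
    ∏ j, (v j ^ n - 1) = ∑ A : Finset σ, (-1) ^ #Aᶜ * (∏ j ∈ A, v j) ^ n := by
  simp_rw [sub_eq_add_neg, prod_add, powerset_univ, ← compl_eq_univ_sdiff, prod_const, prod_pow,
    mul_comm]

theorem mk_mul_genFunDenom (v : σ → S) :
    (PowerSeries.mk fun n => (n : S) * ∏ j, (v j ^ n - 1)) * (genFunDenom v : PowerSeries S) =
      genFunNumer v := by
  simp_rw [prod_pow_sub_one_eq_sum]
  exact mk_mul_denomPoly _ _

theorem eval_genFunNumer_mul_eval_genFunDenom_inv {K : Type*} [Field K] [Infinite K] {v : σ → K}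
    (ρ : Equiv.Perm σ) (hρ : ∀ j, v (ρ j) = (v j)⁻¹) {x : K} (hx : x ≠ 0) :
    (genFunNumer v).eval x * (genFunDenom v).eval x⁻¹ =
      (genFunNumer v).eval x⁻¹ * (genFunDenom v).eval x :=
  eval_numerPoly_mul_eval_denomPoly_inv (Equiv.finsetCongr ρ) (fun A => by simp [card_compl])
    (fun A => by simp [prod_map, hρ]) hx

end GenFun

theorem MvPolynomial.aeval_comp_X {σ A K : Type*} [CommRing A] [CommRing K] [Algebra A K]
    (ξ : σ → K) :
    (MvPolynomial.aeval (R := A) ξ).toRingHom ∘ MvPolynomial.X = ξ := by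
  ext1 j
  simp

theorem MvPolynomial.rename_comp_X {σ A : Type*} [CommRing A] (e : σ → σ) :
    (MvPolynomial.rename (R := A) e).toRingHom ∘ MvPolynomial.X = MvPolynomial.X ∘ e := by
  ext1 j
  simp

section Integrality

variable {σ A K : Type*} [Fintype σ] [CommRing A] [CommRing K] [Algebra A K] {R : A[X]} {ξ : σ → K}

theorem aeval_esymm_mem_bot (hR : R.map (algebraMap A K) = ∏ j, (X - C (ξ j))) {k : ℕ}
    (hk : k ≤ Fintype.card σ) :
    MvPolynomial.aeval ξ (MvPolynomial.esymm σ A k) ∈ (⊥ : Subalgebra A K) := by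
  have hcoeff : (R.map (algebraMap A K)).coeff (Fintype.card σ - k) =
      (-1) ^ k * MvPolynomial.aeval ξ (MvPolynomial.esymm σ A k) := by
    have hprod : ∏ j, (X - C (ξ j)) = ((univ.val.map ξ).map fun t => X - C t).prod := by
      rw [Multiset.map_map]
      rfl
    rw [hR, hprod, Multiset.prod_X_sub_C_coeff _ (by simp),
      MvPolynomial.aeval_esymm_eq_multiset_esymm]
    simp [Nat.sub_sub_self hk]
  have hsign : (-1 : K) ^ k * (-1) ^ k = 1 := by rw [← mul_pow, neg_one_mul, neg_neg, one_pow]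
  rw [← one_mul (MvPolynomial.aeval ξ _), ← hsign, mul_assoc, ← hcoeff, coeff_map]
  exact Subalgebra.mul_mem _ (Subalgebra.pow_mem _ (neg_mem (one_mem _)) _)
    (Subalgebra.algebraMap_mem _ _)

theorem aeval_mem_bot_of_isSymmetric (hR : R.map (algebraMap A K) = ∏ j, (X - C (ξ j)))
    {f : MvPolynomial σ A} (hf : f.IsSymmetric) :
    MvPolynomial.aeval ξ f ∈ (⊥ : Subalgebra A K) := by
  obtain ⟨q, hq⟩ := MvPolynomial.esymmAlgHom_surjective A le_rfl ⟨f, hf⟩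
  have hfq : f = MvPolynomial.aeval (fun i : Fin _ => MvPolynomial.esymm σ A (i + 1)) q := by
    rw [← MvPolynomial.esymmAlgHom_apply, hq]
  rw [hfq, MvPolynomial.comp_aeval_apply]
  refine Algebra.adjoin_le ?_ ((Algebra.adjoin_range_eq_range_aeval A _).ge ⟨q, rfl⟩)
  rintro _ ⟨i, rfl⟩
  exact aeval_esymm_mem_bot hR (by omega)

theorem map_aeval_mem_lifts_of_forall_map_rename
    (hR : R.map (algebraMap A K) = ∏ j, (X - C (ξ j))) {p : (MvPolynomial σ A)[X]}
    (hp : ∀ e : Equiv.Perm σ, p.map (MvPolynomial.rename e).toRingHom = p) :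
    p.map (MvPolynomial.aeval ξ).toRingHom ∈ lifts (algebraMap A K) := by
  refine (lifts_iff_coeff_lifts _).2 fun n => ?_
  have hsymm : (p.coeff n).IsSymmetric := fun e => by
    conv_rhs => rw [← hp e]
    rw [coeff_map]
    rfl
  rw [coeff_map, ← Algebra.mem_bot]
  exact aeval_mem_bot_of_isSymmetric hR hsymm

theorem genFunDenom_mem_lifts (hR : R.map (algebraMap A K) = ∏ j, (X - C (ξ j))) :
    genFunDenom ξ ∈ lifts (algebraMap A K) := by
  rw [← MvPolynomial.aeval_comp_X (A := A) ξ, ← map_genFunDenom]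
  refine map_aeval_mem_lifts_of_forall_map_rename hR fun e => ?_
  rw [map_genFunDenom, MvPolynomial.rename_comp_X, genFunDenom_comp_perm]

theorem genFunNumer_mem_lifts [DecidableEq σ]
    (hR : R.map (algebraMap A K) = ∏ j, (X - C (ξ j))) :
    genFunNumer ξ ∈ lifts (algebraMap A K) := by
  rw [← MvPolynomial.aeval_comp_X (A := A) ξ, ← map_genFunNumer]
  refine map_aeval_mem_lifts_of_forall_map_rename hR fun e => ?_
  rw [map_genFunNumer, MvPolynomial.rename_comp_X, genFunNumer_comp_perm]

end Integrality

theorem exists_perm_apply_eq_inv {G : Type*} [InvolutiveInv G] {s : ℕ} (f : Fin (2 * s) → G)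
    (hf : ∀ j (hj : j < s), f ⟨j + s, by omega⟩ = (f ⟨j, by omega⟩)⁻¹) :
    ∃ ρ : Equiv.Perm (Fin (2 * s)), ∀ j, f (ρ j) = (f j)⁻¹ := by
  let halves : Fin s ⊕ Fin s ≃ Fin (2 * s) := finSumFinEquiv.trans (finCongr (two_mul s).symm)
  have hhalves (j : Fin s) : f (halves (.inr j)) = (f (halves (.inl j)))⁻¹ := by
    convert hf j j.2 using 3 <;> simp [halves, add_comm, Fin.ext_iff]
  refine ⟨halves.permCongr (Equiv.sumComm _ _), halves.forall_congr_right.1 ?_⟩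
  rintro (j | j)
  · simpa using hhalves j
  · simp [hhalves]

theorem generating_function_rational_invariant (s : ℕ) (R : Polynomial ℤ)
    (ξ : Fin (2 * s) → ℂ)
    (hroots : R.map (Int.castRingHom ℂ) =
      ∏ j : Fin (2 * s), (Polynomial.X - Polynomial.C (ξ j)))
    (hpair : ∀ j : Fin s, ξ ⟨(j : ℕ) + s, by omega⟩ = (ξ ⟨(j : ℕ), by omega⟩)⁻¹) :
    ∃ P Q : Polynomial ℤ, Q ≠ 0 ∧
      (PowerSeries.mk fun n => (n : ℂ) * ∏ j : Fin (2 * s), (ξ j ^ n - 1)) *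
          ((Q.map (Int.castRingHom ℂ)) : PowerSeries ℂ) =
        ((P.map (Int.castRingHom ℂ)) : PowerSeries ℂ) ∧
      ∀ x : ℂ, x ≠ 0 →
        (P.map (Int.castRingHom ℂ)).eval x * (Q.map (Int.castRingHom ℂ)).eval x⁻¹ =
          (P.map (Int.castRingHom ℂ)).eval x⁻¹ * (Q.map (Int.castRingHom ℂ)).eval x := by
  rw [← algebraMap_int_eq] at hroots ⊢
  obtain ⟨ρ, hρ⟩ := exists_perm_apply_eq_inv ξ fun j hj => hpair ⟨j, hj⟩
  obtain ⟨P, hP⟩ := (mem_lifts _).1 (genFunNumer_mem_lifts hroots)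
  obtain ⟨Q, hQ⟩ := (mem_lifts _).1 (genFunDenom_mem_lifts hroots)
  refine ⟨P, Q, ?_, ?_, fun x hx => ?_⟩
  · rintro rfl
    exact denomPoly_ne_zero _ (hQ.symm.trans (Polynomial.map_zero _))
  · rw [hP, hQ]
    exact mk_mul_genFunDenom ξ
  · rw [hP, hQ]
    exact eval_genFunNumer_mul_eval_genFunDenom_inv ρ hρ hx
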